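/- arXiv:1712.04990 — 3 statements merged into one kernel-verified Lean document; each statement's English description precedes it below -/
import Mathlib

section
/- Let α ∈ (1, 2], γ > 1 - 1/α with γ > 0, and μ₁ ∈ ℝ. Then the series Σ_{n=0}^∞ (-1)^n Γ(1 + αn) / (n! Γ(1 + γαn)) · μ₁^n converges absolutely. -/
/-!
Log-convexity of `Γ` compares the slope of `log Γ` over `[x, x + a]` with its slopes over the
unit intervals next to it, which are `log` values by `Γ (y + 1) = y Γ y`. This gives
`Γ (x + a) ≤ Γ x (x + a) ^ a` and `Γ y (y - 1) ^ b ≤ Γ (y + b)`, so the ratio of consecutive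
terms of the series is `O(n ^ (α - 1 - γα))`, and `α - 1 - γα < 0` is exactly `γ > 1 - 1 / α`.
-/

open Real Filter Topology
open scoped Nat

namespace Real

theorem log_Gamma_add_le_add_mul_log {x a : ℝ} (hx : 0 < x) (ha : 0 ≤ a) :
    log (Gamma (x + a)) ≤ log (Gamma x) + a * log (x + a) := by
  rcases ha.eq_or_lt with rfl | ha
  · simp
  have hxa : 0 < x + a := by linarith
  have hslope := convexOn_log_Gamma.slope_mono_adjacent (Set.mem_Ioi.2 hx)
    (Set.mem_Ioi.2 (by linarith : 0 < x + a + 1)) (by linarith : x < x + a) (by linarith)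
  have hstep : log (Gamma (x + a + 1)) = log (Gamma (x + a)) + log (x + a) := by
    rw [Gamma_add_one hxa.ne', log_mul hxa.ne' (Gamma_pos_of_pos hxa).ne', add_comm]
  simp only [Function.comp_apply, hstep, add_sub_cancel_left, div_one] at hslope
  rw [div_le_iff₀ ha] at hslope
  linarith

theorem add_mul_log_le_log_Gamma_add {x b : ℝ} (hx : 1 < x) (hb : 0 ≤ b) :
    log (Gamma x) + b * log (x - 1) ≤ log (Gamma (x + b)) := by
  rcases hb.eq_or_lt with rfl | hb
  · simp
  have hx₁ : 0 < x - 1 := by linarith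
  have hslope := convexOn_log_Gamma.slope_mono_adjacent (Set.mem_Ioi.2 hx₁)
    (Set.mem_Ioi.2 (by linarith : 0 < x + b)) (by linarith : x - 1 < x) (by linarith)
  have hstep : log (Gamma x) - log (Gamma (x - 1)) = log (x - 1) := by
    rw [sub_eq_iff_eq_add', ← log_mul (Gamma_pos_of_pos hx₁).ne' hx₁.ne', mul_comm,
      ← Gamma_add_one hx₁.ne', sub_add_cancel]
  simp only [Function.comp_apply, sub_sub_cancel, div_one, add_sub_cancel_left, hstep] at hslope
  rw [le_div_iff₀ hb] at hslope
  linarith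

theorem Gamma_add_le_mul_rpow {x a : ℝ} (hx : 0 < x) (ha : 0 ≤ a) :
    Gamma (x + a) ≤ Gamma x * (x + a) ^ a := by
  have hxa : 0 < x + a := by linarith
  rw [← log_le_log_iff (Gamma_pos_of_pos hxa) (by positivity),
    log_mul (Gamma_pos_of_pos hx).ne' (by positivity), log_rpow hxa]
  exact log_Gamma_add_le_add_mul_log hx ha

theorem mul_rpow_le_Gamma_add {x b : ℝ} (hx : 1 < x) (hb : 0 ≤ b) :
    Gamma x * (x - 1) ^ b ≤ Gamma (x + b) := by
  have hx₁ : 0 < x - 1 := by linarith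
  rw [← log_le_log_iff (by positivity) (Gamma_pos_of_pos (by linarith)),
    log_mul (Gamma_pos_of_pos (by linarith)).ne' (by positivity), log_rpow hx₁]
  exact add_mul_log_le_log_Gamma_add hx hb

end Real

theorem summable_of_norm_succ_le_mul_of_tendsto_zero {E : Type*} [SeminormedAddCommGroup E]
    [CompleteSpace E] {f : ℕ → E} {r : ℕ → ℝ} (hr : Tendsto r atTop (𝓝 0))
    (h : ∀ᶠ n in atTop, ‖f (n + 1)‖ ≤ r n * ‖f n‖) : Summable f := by
  refine summable_of_ratio_norm_eventually_le (r := 1 / 2) (by norm_num) ?_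
  filter_upwards [h, hr.eventually (ge_mem_nhds (by norm_num : (0 : ℝ) < 1 / 2))] with n hn hrn
  exact hn.trans (mul_le_mul_of_nonneg_right hrn (norm_nonneg _))

theorem tendsto_rpow_div_mul_rpow_atTop_zero {α β : ℝ} (hα : 0 ≤ α) (hβ : 0 < β)
    (hαβ : α < β + 1) :
    Tendsto (fun n : ℕ => (1 + α * (n + 1)) ^ α / ((n + 1) * (β * n) ^ β)) atTop (𝓝 0) := by
  have hpow : Tendsto (fun n : ℕ => (n : ℝ) ^ (α - (1 + β))) atTop (𝓝 0) := by
    rw [show α - (1 + β) = -(1 + β - α) by ring]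
    exact (tendsto_rpow_neg_atTop (by linarith)).comp tendsto_natCast_atTop_atTop
  refine squeeze_zero' (Eventually.of_forall fun n => by positivity) ?_
    (by simpa using hpow.const_mul ((1 + 2 * α) ^ α / β ^ β))
  filter_upwards [eventually_ge_atTop 1] with n hn
  have hn : (1 : ℝ) ≤ n := by exact_mod_cast hn
  have hn₀ : (0 : ℝ) < n := by linarith
  have hnum : (1 + α * (n + 1)) ^ α ≤ (1 + 2 * α) ^ α * (n : ℝ) ^ α := by
    rw [← mul_rpow (by positivity) hn₀.le]
    exact rpow_le_rpow (by positivity) (by nlinarith) hα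
  have hden : β ^ β * (n * (n : ℝ) ^ β) ≤ (n + 1) * (β * n) ^ β := by
    rw [mul_rpow hβ.le hn₀.le]
    nlinarith [rpow_pos_of_pos hβ β, rpow_pos_of_pos hn₀ β]
  calc (1 + α * (n + 1)) ^ α / ((n + 1) * (β * n) ^ β)
      ≤ (1 + 2 * α) ^ α * (n : ℝ) ^ α / (β ^ β * (n * (n : ℝ) ^ β)) :=
        div_le_div₀ (by positivity) hnum (by positivity) hden
    _ = (1 + 2 * α) ^ α / β ^ β * (n : ℝ) ^ (α - (1 + β)) := by
        rw [rpow_sub hn₀, rpow_add hn₀, rpow_one]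
        ring

theorem Gamma_div_factorial_mul_Gamma_succ_le {α β : ℝ} (hα : 0 ≤ α) (hβ : 0 < β) {n : ℕ}
    (hn : 1 ≤ n) :
    Gamma (1 + α * (n + 1 : ℕ)) / ((n + 1)! * Gamma (1 + β * (n + 1 : ℕ))) ≤
      (1 + α * (n + 1)) ^ α / ((n + 1) * (β * n) ^ β) *
        (Gamma (1 + α * n) / (n ! * Gamma (1 + β * n))) := by
  have hn : (1 : ℝ) ≤ n := by exact_mod_cast hn
  have hupper := Gamma_add_le_mul_rpow (x := 1 + α * n) (by positivity) hα
  have hlower := mul_rpow_le_Gamma_add (x := 1 + β * n) (by nlinarith) hβ.le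
  rw [add_sub_cancel_left] at hlower
  rw [div_mul_div_comm, Nat.factorial_succ]
  push_cast
  rw [show α * (n + 1) = α * n + α by ring, show β * (n + 1) = β * n + β by ring, ← add_assoc,
    ← add_assoc]
  refine div_le_div₀ (by positivity) ?_ (by positivity) ?_
  · exact hupper.trans_eq (mul_comm _ _)
  · have hden := mul_le_mul_of_nonneg_left hlower (by positivity : (0 : ℝ) ≤ (n + 1) * n !)
    linarith

theorem risk_neutral_series_summable_general (α γ μ₁ : ℝ)
    (hα₁ : 1 < α) (hγ₀ : 0 < γ) (hγ : 1 - 1 / α < γ) :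
    Summable (fun n : ℕ =>
      |(-1 : ℝ) ^ n * Real.Gamma (1 + α * n) /
        ((n.factorial : ℝ) * Real.Gamma (1 + γ * α * n)) * μ₁ ^ n|) := by
  have hβ : 0 < γ * α := by positivity
  have hαβ : α < γ * α + 1 := by
    have := mul_lt_mul_of_pos_right hγ (by linarith : 0 < α)
    rwa [sub_mul, one_div_mul_cancel (by linarith), one_mul, sub_lt_iff_lt_add] at this
  have hnorm : ∀ k : ℕ,
      ‖(-1 : ℝ) ^ k * Gamma (1 + α * k) / (k ! * Gamma (1 + γ * α * k)) * μ₁ ^ k‖ =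
        Gamma (1 + α * k) / (k ! * Gamma (1 + γ * α * k)) * |μ₁| ^ k := by
    intro k
    rw [norm_eq_abs, mul_div_assoc, abs_mul, abs_mul, abs_pow, abs_neg, abs_one, one_pow, one_mul,
      abs_pow, abs_of_nonneg (by positivity)]
  rw [summable_abs_iff]
  refine summable_of_norm_succ_le_mul_of_tendsto_zero (by
    simpa using (tendsto_rpow_div_mul_rpow_atTop_zero (by linarith) hβ hαβ).mul_const |μ₁|) ?_
  filter_upwards [eventually_ge_atTop 1] with n hn
  rw [hnorm, hnorm, pow_succ]
  have hstep := mul_le_mul_of_nonneg_right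
    (Gamma_div_factorial_mul_Gamma_succ_le (α := α) (by linarith) hβ hn)
    (by positivity : 0 ≤ |μ₁| ^ n * |μ₁|)
  linarith

/-- For α ∈ (1,2], γ > 1 - 1/α with γ > 0, and μ₁ ∈ ℝ, the series
Σ (-1)^n Γ(1+αn)/(n! Γ(1+γαn)) μ₁^n converges absolutely. -/
theorem risk_neutral_series_summable (α γ μ₁ : ℝ)
    (hα₁ : 1 < α) (hα₂ : α ≤ 2) (hγ₀ : 0 < γ) (hγ : 1 - 1 / α < γ) :
    Summable (fun n : ℕ =>
      |(-1 : ℝ) ^ n * Real.Gamma (1 + α * n) /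
        ((n.factorial : ℝ) * Real.Gamma (1 + γ * α * n)) * μ₁ ^ n|) :=
  risk_neutral_series_summable_general α γ μ₁ hα₁ hγ₀ hγ
end

section
/- Let α = 2, γ > 1/2. Writing μ₁ = -σ²/2 (with σ > 0 small), the risk-neutral factor satisfies μ = -σ²/Γ(1+2γ) + O(σ⁴) as σ → 0, where μ = -log Σ_{n=0}^∞ (-1)^n Γ(1+2n)/(n! Γ(1+2γn)) μ₁^n. -/
/-!
Since `(-1)ⁿ (-x)ⁿ = xⁿ`, the series is `S(x) = ∑ aₙ xⁿ` at `x = σ²/2`, with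
`aₙ = Γ(1+2n) / (n! Γ(1+2γn))`. From `(2n)! ≤ 4ⁿ (n!)²` and `Γ(1+2γn) ≥ Γ(1+n) = n!` (this is
where `γ ≥ 1/2` enters) we get `0 ≤ aₙ ≤ 4ⁿ`, so `S` is analytic at `0` and
`S(x) = 1 + a₁ x + O(x²)` with `a₁ = 2/Γ(1+2γ)`. Then `log (1 + u) = u + O(u²)` gives
`log S(x) = a₁ x + O(x²)`, i.e. `-log S(σ²/2) = -σ²/Γ(1+2γ) + O(σ⁴)`.
-/

open Filter Topology Asymptotics Real Nat

theorem Real.log_one_add_sub_self_isBigO :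
    (fun u : ℝ => Real.log (1 + u) - u) =O[𝓝 0] fun u => u ^ 2 := by
  have h := (Complex.log_sub_self_isBigO.comp_tendsto
    (Complex.continuous_ofReal.tendsto' 0 0 Complex.ofReal_zero)).norm_norm
  refine isBigO_norm_norm.mp (h.congr' ?_ (by simp))
  filter_upwards [Ioi_mem_nhds (show (-1 : ℝ) < 0 by norm_num)] with u hu
  have hcast : (1 + u : ℂ) = ((1 + u : ℝ) : ℂ) := by push_cast; rfl
  have hpos : (0 : ℝ) ≤ 1 + u := by linarith [Set.mem_Ioi.mp hu]
  simp only [Function.comp_apply, hcast, ← Complex.ofReal_log hpos, ← Complex.ofReal_sub,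
    Complex.norm_real]

theorem tsum_mul_pow_sub_sum_isBigO {a : ℕ → ℝ} {C R : ℝ} (hR : 0 < R)
    (ha : ∀ n, |a n| ≤ C * R ^ n) (k : ℕ) :
    (fun x => ∑' n, a n * x ^ n - ∑ n ∈ Finset.range k, a n * x ^ n) =O[𝓝 0]
      fun x => x ^ k := by
  set p := FormalMultilinearSeries.ofScalars ℝ a
  have hrad : ((R⁻¹).toNNReal : ENNReal) ≤ p.radius := by
    refine p.le_radius_of_bound C fun n => ?_
    rw [FormalMultilinearSeries.ofScalars_norm, Real.norm_eq_abs,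
      Real.coe_toNNReal _ (by positivity), inv_pow]
    calc |a n| * (R ^ n)⁻¹ ≤ C * R ^ n * (R ^ n)⁻¹ := by gcongr; exact ha n
      _ = C := by field_simp
  have hpos : 0 < p.radius := lt_of_lt_of_le (by simpa using hR) hrad
  have h := (p.hasFPowerSeriesOnBall hpos).hasFPowerSeriesAt.isBigO_sub_partialSum_pow k
  refine isBigO_norm_right.mp ?_
  simpa [p, FormalMultilinearSeries.partialSum, FormalMultilinearSeries.sum,
    FormalMultilinearSeries.ofScalars_apply_eq, mul_comm] using h

theorem log_tsum_mul_pow_sub_isBigO {a : ℕ → ℝ} {C R : ℝ} (hR : 0 < R)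
    (ha : ∀ n, |a n| ≤ C * R ^ n) (h0 : a 0 = 1) :
    (fun x => Real.log (∑' n, a n * x ^ n) - a 1 * x) =O[𝓝 0] fun x => x ^ 2 := by
  set S := fun x : ℝ => ∑' n, a n * x ^ n
  have hS2 : (fun x => S x - (1 + a 1 * x)) =O[𝓝 0] fun x => x ^ 2 := by
    simpa [Finset.sum_range_succ, h0] using tsum_mul_pow_sub_sum_isBigO hR ha 2
  have hS1 : (fun x => S x - 1) =O[𝓝 0] fun x => x :=
    ((hS2.trans (isLittleO_pow_id one_lt_two).isBigO).add
      (isBigO_const_mul_self (a 1) id _)).congr_left fun x => by simp only [id]; ring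
  have hlog := Real.log_one_add_sub_self_isBigO.comp_tendsto
    (hS1.trans_tendsto tendsto_id)
  exact ((hlog.trans (hS1.pow 2)).add hS2).congr_left fun x => by
    simp only [Function.comp_apply, add_sub_cancel]; ring

noncomputable def riskNeutralCoeff (γ : ℝ) (n : ℕ) : ℝ :=
  Gamma (1 + 2 * n) / (n ! * Gamma (1 + 2 * γ * n))

theorem factorial_two_mul_le (n : ℕ) : ((2 * n)! : ℝ) ≤ 4 ^ n * n ! * n ! := by
  have h := Nat.add_choose_mul_factorial_mul_factorial n n
  rw [← two_mul, ← Nat.centralBinom_eq_two_mul_choose] at h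
  rw [← h]
  push_cast
  gcongr
  exact_mod_cast Nat.centralBinom_le_four_pow n

theorem riskNeutralCoeff_nonneg {γ : ℝ} (hγ : 0 ≤ γ) (n : ℕ) : 0 ≤ riskNeutralCoeff γ n :=
  div_nonneg (Gamma_nonneg_of_nonneg (by positivity))
    (mul_nonneg (by positivity) (Gamma_nonneg_of_nonneg (by positivity)))

theorem riskNeutralCoeff_le_four_pow {γ : ℝ} (hγ : 1 / 2 ≤ γ) (n : ℕ) :
    riskNeutralCoeff γ n ≤ 4 ^ n := by
  rcases Nat.eq_zero_or_pos n with rfl | hn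
  · simp [riskNeutralCoeff]
  have hn' : (1 : ℝ) ≤ n := by exact_mod_cast hn
  have hfac : (n ! : ℝ) ≤ Gamma (1 + 2 * γ * n) := by
    rw [← Gamma_nat_eq_factorial, add_comm]
    exact Gamma_strictMonoOn_Ici.monotoneOn (Set.mem_Ici.mpr (by linarith))
      (Set.mem_Ici.mpr (by nlinarith)) (by nlinarith)
  have hnum : Gamma (1 + 2 * n) = ((2 * n)! : ℝ) := by
    rw [← Gamma_nat_eq_factorial]; push_cast; ring_nf
  rw [riskNeutralCoeff, hnum, div_le_iff₀ (by positivity)]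
  calc ((2 * n)! : ℝ) ≤ 4 ^ n * n ! * n ! := factorial_two_mul_le n
    _ ≤ 4 ^ n * (n ! * Gamma (1 + 2 * γ * n)) := by rw [mul_assoc]; gcongr

theorem riskNeutralCoeff_one (γ : ℝ) : riskNeutralCoeff γ 1 = 2 / Gamma (1 + 2 * γ) := by
  norm_num [riskNeutralCoeff, show (3 : ℝ) = 2 + 1 by norm_num, Gamma_add_one]

/-- For α = 2, γ > 1/2, with μ₁ = -σ²/2, the risk-neutral factor satisfies
μ = -σ²/Γ(1+2γ) + O(σ⁴) as σ → 0⁺. -/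
theorem risk_neutral_alpha_two (γ : ℝ) (hγ : 1 / 2 < γ) :
    (fun σ : ℝ =>
        (-Real.log (∑' n : ℕ, (-1 : ℝ) ^ n * Real.Gamma (1 + 2 * n) /
            ((n.factorial : ℝ) * Real.Gamma (1 + 2 * γ * n)) * (-σ ^ 2 / 2) ^ n))
          - (-σ ^ 2 / Real.Gamma (1 + 2 * γ))) =O[nhdsWithin 0 (Set.Ioi 0)]
      fun σ : ℝ => σ ^ 4 := by
  have hbound (n : ℕ) : |riskNeutralCoeff γ n| ≤ 1 * 4 ^ n := by
    rw [one_mul, abs_of_nonneg (riskNeutralCoeff_nonneg (by linarith) n)]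
    exact riskNeutralCoeff_le_four_pow hγ.le n
  have hx : Tendsto (fun σ : ℝ => σ ^ 2 / 2) (𝓝[>] 0) (𝓝 0) := by
    refine tendsto_nhdsWithin_of_tendsto_nhds ?_
    simpa using ((continuous_pow 2).div_const (2 : ℝ)).tendsto 0
  have h := ((log_tsum_mul_pow_sub_isBigO four_pos hbound
    (by simp [riskNeutralCoeff])).comp_tendsto hx).neg_left
  have hquartic : ((fun x : ℝ => x ^ 2) ∘ fun σ : ℝ => σ ^ 2 / 2) =O[𝓝[>] 0] fun σ => σ ^ 4 :=
    ((isBigO_refl (fun σ : ℝ => σ ^ 4) _).const_mul_left (1 / 4)).congr_left fun σ => by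
      simp only [Function.comp_apply]; ring
  have hterm (x : ℝ) (n : ℕ) : (-1 : ℝ) ^ n * Gamma (1 + 2 * n) / (n ! * Gamma (1 + 2 * γ * n))
      * (-x) ^ n = riskNeutralCoeff γ n * x ^ n := by
    rw [neg_pow x, riskNeutralCoeff]
    ring_nf
    simp
  refine (h.trans hquartic).congr_left fun σ => ?_
  simp only [Function.comp_apply, neg_div _ (σ ^ 2), hterm, riskNeutralCoeff_one]
  ring
end

section
/- Let α ∈ (1, 2], γ ∈ (1 - 1/α, α], A ∈ ℝ, B > 0. Then the double series Σ_{n≥0, m≥1} (-1)^n / (n! Γ(1 - γ(n-m)/α)) · A^n · B^{(m-n)/α} converges absolutely. -/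
/-!
Put θ = γ/α ∈ (0, 1] and k = m + 1 - n. The (n, m) term is |A|ⁿ/n! · B^{k/α}/|Γ(1 + θk)|.
For k ≥ 0 it is a product of terms of the exponential series and of Σ c^k/Γ(1 + θk), which
converges by the ratio test because log-convexity of Γ gives Γ(x + θ) ≥ x^θ Γ(x)/2 for large x.
For k = -j < 0 we split n! ≥ (m + 1)! j!, and the reflection formula bounds 1/|Γ(1 - θj)| by
Γ(θj); the series Σ Γ(θj) c^j/j! converges by the ratio test, now because
Γ(θj + θ) ≤ (θj)^θ Γ(θj) with θ < 1. For θ = 1 the terms with k < 0 sit at poles of Γ and vanish.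
-/

open Real Filter

theorem Real.Gamma_add_le_mul_rpow_s13 {x s : ℝ} (hx : 0 < x) (hs₀ : 0 ≤ s) (hs₁ : s ≤ 1) :
    Gamma (x + s) ≤ Gamma x * x ^ s := by
  have hΓ := Gamma_pos_of_pos hx
  rcases hs₀.eq_or_lt with rfl | hs₀
  · simp
  rcases hs₁.eq_or_lt with rfl | hs₁
  · rw [Gamma_add_one hx.ne', rpow_one, mul_comm]
  calc Gamma (x + s) = Gamma ((1 - s) * x + s * (x + 1)) := by ring_nf
    _ ≤ Gamma x ^ (1 - s) * Gamma (x + 1) ^ s :=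
      Gamma_mul_add_mul_le_rpow_Gamma_mul_rpow_Gamma hx (by linarith) (by linarith) hs₀ (by ring)
    _ = Gamma x * x ^ s := by
      rw [Gamma_add_one hx.ne', mul_rpow hx.le hΓ.le, mul_left_comm, ← rpow_add hΓ,
        sub_add_cancel, rpow_one, mul_comm]

theorem Real.mul_Gamma_le_Gamma_add_mul_rpow {x θ : ℝ} (hx : 0 < x) (hθ₀ : 0 ≤ θ) (hθ₁ : θ ≤ 1) :
    x * Gamma x ≤ Gamma (x + θ) * (x + θ) ^ (1 - θ) := by
  have h := Gamma_add_le_mul_rpow_s13 (by linarith : 0 < x + θ) (by linarith : 0 ≤ 1 - θ) (by linarith)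
  rwa [add_add_sub_cancel, Gamma_add_one hx.ne'] at h

theorem Real.inv_abs_Gamma_one_sub_le_Gamma {x : ℝ} (hx : 0 < x) :
    |Gamma (1 - x)|⁻¹ ≤ Gamma x := by
  have hΓ := Gamma_pos_of_pos hx
  rcases eq_or_ne (Gamma (1 - x)) 0 with h | h
  · simpa [h] using hΓ.le
  have hsin : sin (π * x) ≠ 0 := by
    intro h0
    have := Gamma_mul_Gamma_one_sub x
    rw [h0, div_zero] at this
    exact mul_ne_zero hΓ.ne' h this
  have hprod : 1 ≤ Gamma x * |Gamma (1 - x)| := by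
    rw [← abs_of_pos hΓ, ← abs_mul, Gamma_mul_Gamma_one_sub, abs_div, abs_of_pos pi_pos,
      le_div_iff₀ (abs_pos.2 hsin), one_mul]
    exact (abs_sin_le_one _).trans (by linarith [pi_gt_three])
  exact (inv_le_iff_one_le_mul₀ (abs_pos.2 h)).2 hprod

theorem summable_pow_div_Gamma_one_add_mul {θ : ℝ} (hθ₀ : 0 < θ) (hθ₁ : θ ≤ 1) (c : ℝ) :
    Summable fun k : ℕ => c ^ k / Gamma (1 + θ * k) := by
  have hnorm (k : ℕ) : ‖c ^ k / Gamma (1 + θ * k)‖ = |c| ^ k / Gamma (1 + θ * k) := by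
    rw [norm_div, norm_pow, Real.norm_eq_abs, Real.norm_eq_abs,
      abs_of_pos (Gamma_pos_of_pos (by positivity))]
  have htop : Tendsto (fun k : ℕ => (1 + θ * k) ^ θ) atTop atTop :=
    (tendsto_rpow_atTop hθ₀).comp <| tendsto_atTop_add_const_left _ _ <|
      tendsto_natCast_atTop_atTop.const_mul_atTop hθ₀
  refine summable_of_ratio_norm_eventually_le (r := 1 / 2) (by norm_num) ?_
  filter_upwards [htop.eventually_ge_atTop (4 * |c|)] with k hk
  set x : ℝ := 1 + θ * k
  have hx : 1 ≤ x := by simp only [x]; nlinarith [(Nat.cast_nonneg k : (0 : ℝ) ≤ k)]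
  have hx₀ : 0 < x := by linarith
  have hΓx := Gamma_pos_of_pos hx₀
  have hpow₀ : 0 < (x + θ) ^ (1 - θ) := rpow_pos_of_pos (by linarith) _
  have hpow : (x + θ) ^ (1 - θ) ≤ 2 * x ^ (1 - θ) :=
    calc (x + θ) ^ (1 - θ) ≤ (2 * x) ^ (1 - θ) :=
          rpow_le_rpow (by linarith) (by linarith) (by linarith)
      _ = 2 ^ (1 - θ) * x ^ (1 - θ) := mul_rpow (by norm_num) hx₀.le
      _ ≤ 2 * x ^ (1 - θ) := by
          gcongr
          simpa using rpow_le_rpow_of_exponent_le (by norm_num : (1 : ℝ) ≤ 2)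
            (by linarith : 1 - θ ≤ 1)
  have hgrowth : 2 * |c| * Gamma x ≤ Gamma (x + θ) := by
    have h4 : 4 * |c| * x ^ (1 - θ) ≤ x := by
      calc 4 * |c| * x ^ (1 - θ) ≤ x ^ θ * x ^ (1 - θ) := by gcongr
        _ = x := by rw [← rpow_add hx₀, add_sub_cancel, rpow_one]
    refine le_of_mul_le_mul_right ?_ hpow₀
    calc 2 * |c| * Gamma x * (x + θ) ^ (1 - θ) ≤ 2 * |c| * Gamma x * (2 * x ^ (1 - θ)) := by
          gcongr
      _ ≤ x * Gamma x := by nlinarith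
      _ ≤ Gamma (x + θ) * (x + θ) ^ (1 - θ) := mul_Gamma_le_Gamma_add_mul_rpow hx₀ hθ₀.le hθ₁
  have harg : 1 + θ * ((k + 1 : ℕ) : ℝ) = x + θ := by push_cast; ring
  rw [hnorm, hnorm, harg, div_le_iff₀ (Gamma_pos_of_pos (by linarith)), pow_succ]
  calc |c| ^ k * |c| = 1 / 2 * (|c| ^ k / Gamma x) * (2 * |c| * Gamma x) := by
        field_simp
    _ ≤ 1 / 2 * (|c| ^ k / Gamma x) * Gamma (x + θ) := by gcongr

theorem summable_Gamma_mul_mul_pow_div_factorial {θ : ℝ} (hθ₀ : 0 < θ) (hθ₁ : θ < 1) (c : ℝ) :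
    Summable fun j : ℕ => Gamma (θ * j) * c ^ j / j.factorial := by
  have hnorm (j : ℕ) : ‖Gamma (θ * j) * c ^ j / j.factorial‖ =
      Gamma (θ * j) * |c| ^ j / j.factorial := by
    rw [norm_div, norm_mul, norm_pow, Real.norm_eq_abs, Real.norm_eq_abs, Real.norm_eq_abs,
      abs_of_nonneg (Gamma_nonneg_of_nonneg (by positivity)), Nat.abs_cast]
  have hdecay : Tendsto (fun j : ℕ => (j : ℝ) ^ (θ - 1)) atTop (nhds 0) := by
    have h := (tendsto_rpow_neg_atTop (by linarith : 0 < 1 - θ)).comp tendsto_natCast_atTop_atTop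
    rwa [neg_sub] at h
  refine summable_of_ratio_norm_eventually_le (r := 1 / 2) (by norm_num) ?_
  filter_upwards [eventually_ge_atTop 1,
    hdecay.eventually_le_const (by positivity : (0 : ℝ) < 1 / (2 * |c| + 1))] with j hj hjθ
  have hj₀ : (0 : ℝ) < j := by exact_mod_cast hj
  have hθj : 0 < θ * j := by positivity
  have hgrowth : Gamma (θ * j + θ) * (2 * |c|) ≤ Gamma (θ * j) * (j + 1) :=
    calc Gamma (θ * j + θ) * (2 * |c|) ≤ Gamma (θ * j) * (θ * j) ^ θ * (2 * |c|) := by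
          gcongr
          exact Gamma_add_le_mul_rpow_s13 hθj hθ₀.le hθ₁.le
      _ ≤ Gamma (θ * j) * (j : ℝ) ^ θ * (2 * |c|) := by
          gcongr
          nlinarith
      _ = Gamma (θ * j) * ((2 * |c|) * (j : ℝ) ^ (θ - 1) * j) := by
          rw [rpow_sub hj₀, rpow_one]
          field_simp
      _ ≤ Gamma (θ * j) * (j + 1) := by
          gcongr
          calc 2 * |c| * (j : ℝ) ^ (θ - 1) * j ≤ 2 * |c| * (1 / (2 * |c| + 1)) * j := by gcongr
            _ ≤ 1 * j := by
                gcongr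
                rw [mul_one_div, div_le_one (by positivity)]
                linarith
            _ ≤ j + 1 := by linarith
  have harg : θ * ((j + 1 : ℕ) : ℝ) = θ * j + θ := by push_cast; ring
  rw [hnorm, hnorm, harg, Nat.factorial_succ, Nat.cast_mul, div_le_iff₀ (by positivity), pow_succ]
  calc Gamma (θ * j + θ) * (|c| ^ j * |c|)
      = |c| ^ j / 2 * (Gamma (θ * j + θ) * (2 * |c|)) := by ring
    _ ≤ |c| ^ j / 2 * (Gamma (θ * j) * (j + 1)) := by gcongr
    _ = 1 / 2 * (Gamma (θ * j) * |c| ^ j / j.factorial) * (((j + 1 : ℕ) : ℝ) * j.factorial) := by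
      push_cast
      field_simp

theorem summable_pow_div_factorial_mul_abs_Gamma_one_sub_mul {θ : ℝ} (hθ₀ : 0 < θ) (hθ₁ : θ ≤ 1)
    (c : ℝ) : Summable fun j : ℕ => c ^ j / (j.factorial * |Gamma (1 - θ * j)|) := by
  have hnorm (j : ℕ) : ‖c ^ j / (j.factorial * |Gamma (1 - θ * j)|)‖ =
      |Gamma (1 - θ * j)|⁻¹ * |c| ^ j / j.factorial := by
    rw [norm_div, norm_mul, norm_pow, Real.norm_eq_abs, Real.norm_eq_abs, Real.norm_eq_abs,
      abs_abs, Nat.abs_cast]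
    ring
  rcases hθ₁.lt_or_eq with hθ₁ | rfl
  · refine (summable_Gamma_mul_mul_pow_div_factorial hθ₀ hθ₁ |c|).of_norm_bounded_eventually_nat ?_
    filter_upwards [eventually_ge_atTop 1] with j hj
    rw [hnorm]
    gcongr
    exact inv_abs_Gamma_one_sub_le_Gamma (by positivity)
  · refine summable_zero.of_norm_bounded_eventually_nat ?_
    filter_upwards [eventually_ge_atTop 1] with j hj
    have hpole : 1 - 1 * (j : ℝ) = -((j - 1 : ℕ) : ℝ) := by push_cast [Nat.cast_sub hj]; ring
    rw [hnorm, hpole, Gamma_neg_nat_eq_zero]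
    simp

theorem pow_div_factorial_add_le {x : ℝ} (hx : 0 ≤ x) (i j : ℕ) :
    x ^ (i + j) / (i + j).factorial ≤ x ^ i / i.factorial * (x ^ j / j.factorial) := by
  rw [pow_add, div_mul_div_comm]
  gcongr
  exact_mod_cast Nat.le_of_dvd (Nat.factorial_pos _)
    (Nat.factorial_mul_factorial_dvd_factorial_add i j)

theorem summable_mul_int_sub {a : ℕ → ℝ} {w : ℤ → ℝ} (ha₀ : ∀ n, 0 ≤ a n) (hw₀ : ∀ k, 0 ≤ w k)
    (ha_add : ∀ i j, a (i + j) ≤ a i * a j) (ha : Summable a)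
    (hw_nat : Summable fun k : ℕ => w k) (hw_neg : Summable fun j : ℕ => a j * w (-j)) :
    Summable fun p : ℕ × ℕ => a p.1 * w (p.2 - p.1) := by
  set s : Set (ℕ × ℕ) := {p | p.1 ≤ p.2}
  rw [← summable_subtype_and_compl (s := s)]
  constructor
  · refine ((ha.mul_of_nonneg hw_nat ha₀ fun k => hw₀ k).comp_injective
      (i := fun p : s => (p.1.1, p.1.2 - p.1.1)) ?_).of_nonneg_of_le
      (fun p => mul_nonneg (ha₀ _) (hw₀ _)) fun ⟨(n, m), (h : n ≤ m)⟩ => ?_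
    · rintro ⟨⟨n, m⟩, hnm : n ≤ m⟩ ⟨⟨n', m'⟩, hnm' : n' ≤ m'⟩ h
      simp only [Prod.mk.injEq] at h
      ext <;> simp only <;> omega
    · simp [Nat.cast_sub h]
  · refine ((ha.mul_of_nonneg hw_neg ha₀ fun j => mul_nonneg (ha₀ j) (hw₀ _)).comp_injective
      (i := fun p : (sᶜ : Set (ℕ × ℕ)) => (p.1.2, p.1.1 - p.1.2)) ?_).of_nonneg_of_le
      (fun p => mul_nonneg (ha₀ _) (hw₀ _)) fun ⟨(n, m), (h : ¬n ≤ m)⟩ => ?_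
    · rintro ⟨⟨n, m⟩, hnm : ¬n ≤ m⟩ ⟨⟨n', m'⟩, hnm' : ¬n' ≤ m'⟩ h
      simp only [Prod.mk.injEq] at h
      ext <;> simp only <;> omega
    · obtain ⟨j, rfl⟩ : ∃ j, n = m + j := ⟨n - m, by omega⟩
      calc a (m + j) * w (m - (m + j : ℕ)) = a (m + j) * w (-j) := by push_cast; ring_nf
        _ ≤ a m * a j * w (-j) := by gcongr; exacts [hw₀ _, ha_add m j]
        _ = _ := by simp [mul_assoc]

theorem call_price_double_series_summable_general (α γ A B : ℝ)
    (hα₁ : 1 < α) (hγ₁ : 1 - 1 / α < γ) (hγ₂ : γ ≤ α)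
    (hB : 0 < B) :
    Summable (fun p : ℕ × ℕ =>
      |(-1 : ℝ) ^ p.1 /
          ((p.1.factorial : ℝ) *
            Real.Gamma (1 - γ * ((p.1 : ℝ) - (p.2 + 1)) / α)) *
        A ^ p.1 * B ^ (((p.2 : ℝ) + 1 - p.1) / α)|) := by
  have hα₀ : 0 < α := by linarith
  have hθ₀ : 0 < γ / α := div_pos (by linarith [(div_lt_one hα₀).2 hα₁]) hα₀
  have hθ₁ : γ / α ≤ 1 := (div_le_one hα₀).2 hγ₂
  set b := B ^ (1 / α)
  have hBpow (k : ℕ) : B ^ ((k : ℝ) / α) = b ^ k := by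
    rw [← rpow_natCast, ← rpow_mul hB.le, one_div_mul_eq_div]
  have hsum := summable_mul_int_sub (a := fun n => |A| ^ n / n.factorial)
    (w := fun k : ℤ => B ^ ((k : ℝ) / α) / |Gamma (1 + γ / α * k)|)
    (fun n => by positivity) (fun k => by positivity) (pow_div_factorial_add_le (abs_nonneg A))
    (Real.summable_pow_div_factorial _) ?_ ?_
  · refine (hsum.comp_injective (i := fun p : ℕ × ℕ => (p.1, p.2 + 1)) ?_).congr fun ⟨n, m⟩ => ?_
    · intro p q h
      simpa [Prod.ext_iff] using h
    · have harg : 1 - γ * ((n : ℝ) - (m + 1)) / α = 1 + γ / α * ((m + 1 : ℕ) - n : ℤ) := by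
        push_cast; ring
      simp only [Function.comp_apply, harg, abs_mul, abs_div, abs_pow, abs_neg, abs_one, one_pow,
        Nat.abs_cast, abs_of_pos (rpow_pos_of_pos hB _)]
      push_cast
      ring
  · refine (summable_pow_div_Gamma_one_add_mul hθ₀ hθ₁ b).congr fun k => ?_
    rw [Int.cast_natCast, hBpow, abs_of_pos (Gamma_pos_of_pos (by positivity))]
  · refine (summable_pow_div_factorial_mul_abs_Gamma_one_sub_mul hθ₀ hθ₁ (|A| / b)).congr
      fun j => ?_
    rw [Int.cast_neg, Int.cast_natCast, neg_div, rpow_neg hB.le, hBpow, div_pow, mul_neg,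
      ← sub_eq_add_neg]
    ring

/-- Absolute convergence of the call-price double series: for α ∈ (1,2],
γ ∈ (1-1/α, α], A ∈ ℝ, B > 0, the series
Σ_{n≥0,m≥1} (-1)^n/(n! Γ(1-γ(n-m)/α)) A^n B^{(m-n)/α} converges absolutely.
(The index p.2 ranges over ℕ and m = p.2 + 1 ≥ 1.) -/
theorem call_price_double_series_summable (α γ A B : ℝ)
    (hα₁ : 1 < α) (hα₂ : α ≤ 2) (hγ₁ : 1 - 1 / α < γ) (hγ₂ : γ ≤ α)
    (hB : 0 < B) :
    Summable (fun p : ℕ × ℕ =>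
      |(-1 : ℝ) ^ p.1 /
          ((p.1.factorial : ℝ) *
            Real.Gamma (1 - γ * ((p.1 : ℝ) - (p.2 + 1)) / α)) *
        A ^ p.1 * B ^ (((p.2 : ℝ) + 1 - p.1) / α)|) :=
  call_price_double_series_summable_general α γ A B hα₁ hγ₁ hγ₂ hB
end
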